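/- arXiv:2601.01208 — 2 statements merged into one kernel-verified Lean document; each statement's English description precedes it below -/
import Mathlib

section
/- (Fuglede–Putnam for matrices) If N, M ∈ M_n(ℂ) are normal matrices and T ∈ M_n(ℂ) satisfies N T = T M, then N* T = T M*. -/
open Matrix

lemma trace_conjTranspose_mul_self_eq_zero {k : ℕ} (X : Matrix (Fin k) (Fin k) ℂ)
    (h : (Xᴴ * X).trace = 0) : X = 0 := by
  have h2 : ∑ j, ∑ i, Complex.normSq (X i j) = 0 := by
    have := congrArg Complex.re h
    simpa [Matrix.trace, Matrix.mul_apply, Matrix.diag, Matrix.conjTranspose_apply,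
      Complex.re_sum, Complex.mul_re, Complex.normSq_apply] using this
  ext i j
  have hnn : ∀ j ∈ Finset.univ, (0:ℝ) ≤ ∑ i, Complex.normSq (X i j) := by
    intro j _
    exact Finset.sum_nonneg fun i _ => Complex.normSq_nonneg _
  have h3 := (Finset.sum_eq_zero_iff_of_nonneg hnn).mp h2 j (Finset.mem_univ j)
  have h4 := (Finset.sum_eq_zero_iff_of_nonneg
    (fun i _ => Complex.normSq_nonneg (X i j))).mp h3 i (Finset.mem_univ i)
  simpa using Complex.normSq_eq_zero.mp h4

theorem stmt_5 {n : ℕ} (N M T : Matrix (Fin n) (Fin n) ℂ)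
    (hN : N * N.conjTranspose = N.conjTranspose * N)
    (hM : M * M.conjTranspose = M.conjTranspose * M)
    (h : N * T = T * M) :
    N.conjTranspose * T = T * M.conjTranspose := by
  set X := Nᴴ * T - T * Mᴴ with hX
  have key : (Xᴴ * X).trace = 0 := by
    have hXH : Xᴴ = Tᴴ * N - M * Tᴴ := by
      simp [hX, Matrix.conjTranspose_sub, Matrix.conjTranspose_mul]
    have e1 : (Tᴴ * (N * Nᴴ) * T).trace = (M * Tᴴ * Nᴴ * T).trace := by
      rw [hN]
      have : Tᴴ * (Nᴴ * N) * T = Tᴴ * Nᴴ * (N * T) := by noncomm_ring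
      rw [this, h]
      have : Tᴴ * Nᴴ * (T * M) = (Tᴴ * Nᴴ * T) * M := by noncomm_ring
      rw [this, Matrix.trace_mul_comm]
      congr 1
      noncomm_ring
    have e2 : (Tᴴ * N * (T * Mᴴ)).trace = (M * Tᴴ * (T * Mᴴ)).trace := by
      rw [show Tᴴ * N * (T * Mᴴ) = Tᴴ * (N * T) * Mᴴ by noncomm_ring, h]
      rw [show Tᴴ * (T * M) * Mᴴ = Tᴴ * T * (M * Mᴴ) by noncomm_ring, hM]
      rw [show Tᴴ * T * (Mᴴ * M) = (Tᴴ * T * Mᴴ) * M by noncomm_ring, Matrix.trace_mul_comm]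
      congr 1
      noncomm_ring
    have expand : Xᴴ * X =
        Tᴴ * (N * Nᴴ) * T - Tᴴ * N * (T * Mᴴ) - M * Tᴴ * Nᴴ * T + M * Tᴴ * (T * Mᴴ) := by
      rw [hXH, hX]; noncomm_ring
    rw [expand]
    simp only [Matrix.trace_add, Matrix.trace_sub]
    rw [e1, e2]
    noncomm_ring
  have h0 := trace_conjTranspose_mul_self_eq_zero X key
  exact sub_eq_zero.mp h0
end

section
/- Let X be diagonalizable in M_n(ℂ) and suppose X = R N R⁻¹ = R' N' R'⁻¹ where N, N' are normal matrices and R, R' are positive definite Hermitian matrices. Then R⁻¹ N R = R'⁻¹ N' R'. In other words, the map X ↦ R⁻¹ N R on diagonalizable matrices is well defined independently of the chosen decomposition. -/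
/-!
Since `R N R⁻¹ = R' N' R'⁻¹`, the matrix `M = R'⁻¹ R` intertwines the normal matrices `N` and `N'`:
`M N = N' M`. By the Fuglede–Putnam theorem `M` then also intertwines `Nᴴ` and `N'ᴴ`, and taking
adjoints shows that `Mᴴ = R R'⁻¹` intertwines `N'` and `N`, which is the claim
`R⁻¹ N R = R'⁻¹ N' R'`.
-/

/-- A complex matrix is positive definite Hermitian. -/
def PosDefHermitian {n : ℕ} (P : Matrix (Fin n) (Fin n) ℂ) : Prop :=
  P.IsHermitian ∧ ∀ x : Fin n → ℂ, x ≠ 0 →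
    0 < (dotProduct (star x) (P.mulVec x)).re

open scoped ComplexOrder Matrix.Norms.L2Operator

lemma PosDefHermitian.posDef {n : ℕ} {P : Matrix (Fin n) (Fin n) ℂ} (hP : PosDefHermitian P) :
    P.PosDef :=
  Matrix.posDef_iff_dotProduct_mulVec.mpr ⟨hP.1, fun x hx =>
    Complex.lt_def.mpr ⟨hP.2 x hx, (hP.1.im_star_dotProduct_mulVec_self x).symm⟩⟩

lemma Units.semiconjBy_inv_mul_iff {M : Type*} [Monoid M] {u v : Mˣ} {x y : M} :
    SemiconjBy (↑u⁻¹ * ↑v : M) x y ↔ ↑v * x * ↑v⁻¹ = ↑u * y * ↑u⁻¹ := by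
  rw [SemiconjBy, mul_assoc, Units.inv_mul_eq_iff_eq_mul, Units.mul_inv_eq_iff_eq_mul]
  simp only [mul_assoc]

theorem inv_mul_mul_eq_of_mul_mul_inv_eq {A : Type*} [CStarAlgebra A] {a b : A} {r r' : Aˣ}
    (ha : IsStarNormal a) (hb : IsStarNormal b)
    (hr : IsSelfAdjoint (r : A)) (hr' : IsSelfAdjoint (r' : A))
    (h : r * a * ↑r⁻¹ = r' * b * ↑r'⁻¹) :
    ↑r⁻¹ * a * r = ↑r'⁻¹ * b * r' := by
  have hintertwine : SemiconjBy (↑r'⁻¹ * r : A) a b := Units.semiconjBy_inv_mul_iff.mpr h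
  have hstar : star (↑r'⁻¹ * r : A) = r * ↑r'⁻¹ := by
    rw [star_mul, hr.star_eq, ← Units.coe_star_inv, show star r' = r' from Units.ext hr'.star_eq]
  have hadjoint : SemiconjBy (r * ↑r'⁻¹ : A) b a := by
    simpa only [hstar, star_star] using (hintertwine.star_right ha hb).star_star_star
  have := (Units.semiconjBy_inv_mul_iff (u := r⁻¹) (v := r'⁻¹)).mp hadjoint
  simpa only [inv_inv] using this.symm

theorem stmt_17_general {n : ℕ} (X N N' R R' : Matrix (Fin n) (Fin n) ℂ)
    (hN : N * N.conjTranspose = N.conjTranspose * N)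
    (hN' : N' * N'.conjTranspose = N'.conjTranspose * N')
    (hR : PosDefHermitian R) (hR' : PosDefHermitian R')
    (h1 : X = R * N * R⁻¹) (h2 : X = R' * N' * R'⁻¹) :
    R⁻¹ * N * R = R'⁻¹ * N' * R' := by
  obtain ⟨u, rfl⟩ := hR.posDef.isUnit
  obtain ⟨u', rfl⟩ := hR'.posDef.isUnit
  simp only [← Matrix.coe_units_inv] at h1 h2 ⊢
  exact inv_mul_mul_eq_of_mul_mul_inv_eq ⟨hN.symm⟩ ⟨hN'.symm⟩ hR.1 hR'.1 (h1.symm.trans h2)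

theorem stmt_17 {n : ℕ} (X N N' R R' : Matrix (Fin n) (Fin n) ℂ)
    (hdiag : ∃ P D : Matrix (Fin n) (Fin n) ℂ,
      IsUnit P ∧ D.IsDiag ∧ X = P * D * P⁻¹)
    (hN : N * N.conjTranspose = N.conjTranspose * N)
    (hN' : N' * N'.conjTranspose = N'.conjTranspose * N')
    (hR : PosDefHermitian R) (hR' : PosDefHermitian R')
    (h1 : X = R * N * R⁻¹) (h2 : X = R' * N' * R'⁻¹) :
    R⁻¹ * N * R = R'⁻¹ * N' * R' :=
  stmt_17_general X N N' R R' hN hN' hR hR' h1 h2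
end
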